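/- arXiv:2508.16355 — 3 statements merged into one kernel-verified Lean document; each statement's English description precedes it below -/
import Mathlib

section
/- For a real-valued random variable Y with CDF F and observation y, the CRPS defined as ∫_ℝ (F(z) − 1{z ≥ y})² dz equals 2 ∫_0^1 ρ(y, F⁻¹(q)) dq, where ρ(y, ŷ) = (y − ŷ)(q − 1{y ≤ ŷ}) is the quantile (pinball) loss at level q, assuming F is continuous and strictly increasing (so F⁻¹ exists). -/
/-!
The CRPS integrand and the pinball loss are the two marginals of the kernel
`K(q, z) = (q - 1{y ≤ z}) (1{q < F z} - 1{y ≤ z})` on `(0,1) × ℝ`: integrating out `q` gives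
`(F z - 1{y ≤ z})² / 2`, and since `q < F z ↔ F⁻¹ q < z`, integrating out `z` gives the pinball
loss `ρ_q(y, F⁻¹ q)`. The kernel is nonnegative with integrable sections, so both iterated
Bochner integrals are the `toReal` of its lower integral over the product, and Tonelli exchanges
them.
-/

open MeasureTheory Set

/-- Pinball (quantile) loss at level `q`. -/
noncomputable def pinball (q y c : ℝ) : ℝ := (y - c) * (q - if y ≤ c then 1 else 0)

open Function
open scoped ENNReal

section Tonelli

variable {α β : Type*} [MeasurableSpace α] [MeasurableSpace β] {μ : Measure α} {ν : Measure β}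
  [SFinite ν] {f : α → β → ℝ}

theorem integral_integral_eq_toReal_lintegral_prod (hf : Measurable (uncurry f))
    (hf0 : ∀ᵐ x ∂μ, 0 ≤ᵐ[ν] f x) (hfi : ∀ᵐ x ∂μ, Integrable (f x) ν) :
    ∫ x, ∫ y, f x y ∂ν ∂μ = (∫⁻ p, ENNReal.ofReal (uncurry f p) ∂μ.prod ν).toReal := by
  have hsection : ∀ᵐ x ∂μ, ∫ y, f x y ∂ν = (∫⁻ y, ENNReal.ofReal (f x y) ∂ν).toReal := by
    filter_upwards [hf0, hfi] with x h0 hi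
    exact integral_eq_lintegral_of_nonneg_ae h0 hi.aestronglyMeasurable
  have hfinite : ∀ᵐ x ∂μ, ∫⁻ y, ENNReal.ofReal (f x y) ∂ν < ∞ := by
    filter_upwards [hfi] with x hi using hi.lintegral_lt_top
  have hmeas : Measurable fun x => ∫⁻ y, ENNReal.ofReal (f x y) ∂ν :=
    hf.ennreal_ofReal.lintegral_prod_right'
  rw [integral_congr_ae hsection, integral_toReal hmeas.aemeasurable hfinite]
  exact congrArg ENNReal.toReal (lintegral_prod _ hf.ennreal_ofReal.aemeasurable).symm

theorem integral_integral_swap_of_nonneg [SFinite μ] (hf : Measurable (uncurry f))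
    (hf0 : ∀ᵐ x ∂μ, ∀ y, 0 ≤ f x y) (hfi : ∀ᵐ x ∂μ, Integrable (f x) ν)
    (hfi' : ∀ᵐ y ∂ν, Integrable (f · y) μ) :
    ∫ x, ∫ y, f x y ∂ν ∂μ = ∫ y, ∫ x, f x y ∂μ ∂ν := by
  have hf0' : ∀ᵐ y ∂ν, 0 ≤ᵐ[μ] (f · y) :=
    .of_forall fun y => hf0.mono fun x hx => hx y
  rw [integral_integral_eq_toReal_lintegral_prod hf (hf0.mono fun x hx => .of_forall hx) hfi,
    integral_integral_eq_toReal_lintegral_prod (f := fun y x => f x y) (hf.comp measurable_swap)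
      hf0' hfi']
  exact congrArg ENNReal.toReal (lintegral_prod_swap _).symm

end Tonelli

noncomputable def crpsKernel (F : ℝ → ℝ) (y q z : ℝ) : ℝ :=
  (q - if y ≤ z then 1 else 0) * ((if q < F z then 1 else 0) - if y ≤ z then 1 else 0)

section crpsKernel

variable {F : ℝ → ℝ} {y q z c : ℝ}

theorem measurable_crpsKernel (hF : Measurable F) : Measurable (uncurry (crpsKernel F y)) := by
  have hle : MeasurableSet {p : ℝ × ℝ | y ≤ p.2} := measurableSet_le measurable_const measurable_snd
  have hlt : MeasurableSet {p : ℝ × ℝ | p.1 < F p.2} :=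
    measurableSet_lt measurable_fst (hF.comp measurable_snd)
  exact (measurable_fst.sub (measurable_const.ite hle measurable_const)).mul
    ((measurable_const.ite hlt measurable_const).sub (measurable_const.ite hle measurable_const))

theorem crpsKernel_nonneg (hq : q ∈ Icc 0 1) : 0 ≤ crpsKernel F y q z := by
  obtain ⟨h0, h1⟩ := hq
  unfold crpsKernel
  split_ifs <;> nlinarith

theorem crpsKernel_eq_indicator_Ioo (hF : StrictMono F) (hc : F c = q) (hcy : c < y) :
    crpsKernel F y q = (Ioo c y).indicator fun _ => q := by
  funext z
  have hlt : q < F z ↔ c < z := hc ▸ hF.lt_iff_lt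
  simp only [crpsKernel, indicator_apply, mem_Ioo, hlt]
  split_ifs <;> grind

theorem crpsKernel_eq_indicator_Icc (hF : StrictMono F) (hc : F c = q) (hyc : y ≤ c) :
    crpsKernel F y q = (Icc y c).indicator fun _ => 1 - q := by
  funext z
  have hlt : q < F z ↔ c < z := hc ▸ hF.lt_iff_lt
  simp only [crpsKernel, indicator_apply, mem_Icc, hlt]
  split_ifs <;> grind

theorem integrable_crpsKernel (hF : StrictMono F) (hc : F c = q) :
    Integrable (crpsKernel F y q) := by
  rcases lt_or_ge c y with hcy | hyc
  · rw [crpsKernel_eq_indicator_Ioo hF hc hcy]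
    exact (integrableOn_const measure_Ioo_lt_top.ne).integrable_indicator measurableSet_Ioo
  · rw [crpsKernel_eq_indicator_Icc hF hc hyc]
    exact (integrableOn_const measure_Icc_lt_top.ne).integrable_indicator measurableSet_Icc

theorem integral_crpsKernel (hF : StrictMono F) (hc : F c = q) :
    ∫ z, crpsKernel F y q z = pinball q y c := by
  rcases lt_or_ge c y with hcy | hyc
  · rw [crpsKernel_eq_indicator_Ioo hF hc hcy, integral_indicator measurableSet_Ioo,
      setIntegral_const, Real.volume_real_Ioo_of_le hcy.le, smul_eq_mul, pinball,
      if_neg hcy.not_ge]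
    ring
  · rw [crpsKernel_eq_indicator_Icc hF hc hyc, integral_indicator measurableSet_Icc,
      setIntegral_const, Real.volume_real_Icc_of_le hyc, smul_eq_mul, pinball, if_pos hyc]
    ring

theorem crpsKernel_eq_indicator_Ici_of_le (h : y ≤ z) :
    (crpsKernel F y · z) = (Ici (F z)).indicator fun q => 1 - q := by
  funext q
  simp only [crpsKernel, indicator_apply, mem_Ici, if_pos h]
  split_ifs <;> grind

theorem crpsKernel_eq_indicator_Iio_of_lt (h : z < y) :
    (crpsKernel F y · z) = (Iio (F z)).indicator fun q => q := by
  funext q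
  simp only [crpsKernel, indicator_apply, mem_Iio, if_neg h.not_ge]
  split_ifs <;> grind

theorem integrableOn_Ioo_crpsKernel : IntegrableOn (crpsKernel F y · z) (Ioo 0 1) := by
  refine IntegrableOn.mono_set ?_ Ioo_subset_Icc_self
  rcases le_or_gt y z with h | h
  · rw [crpsKernel_eq_indicator_Ici_of_le h]
    exact (continuous_const.sub continuous_id).integrableOn_Icc.indicator measurableSet_Ici
  · rw [crpsKernel_eq_indicator_Iio_of_lt h]
    exact continuous_id.integrableOn_Icc.indicator measurableSet_Iio

theorem setIntegral_Ioo_crpsKernel (hz : F z ∈ Icc 0 1) :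
    ∫ q in Ioo 0 1, crpsKernel F y q z = (F z - if y ≤ z then 1 else 0) ^ 2 / 2 := by
  obtain ⟨h0, h1⟩ := hz
  rw [← integral_Icc_eq_integral_Ioo]
  rcases le_or_gt y z with h | h
  · have hset : Icc 0 1 ∩ Ici (F z) = Icc (F z) 1 := by
      ext q; simp only [mem_inter_iff, mem_Icc, mem_Ici]; grind
    rw [crpsKernel_eq_indicator_Ici_of_le h, setIntegral_indicator measurableSet_Ici, hset,
      integral_Icc_eq_integral_Ioc, ← intervalIntegral.integral_of_le h1,
      intervalIntegral.integral_sub intervalIntegrable_const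
        intervalIntegral.intervalIntegrable_id, intervalIntegral.integral_const, integral_id,
      smul_eq_mul, if_pos h]
    ring
  · have hset : Icc 0 1 ∩ Iio (F z) = Ico 0 (F z) := by
      ext q; simp only [mem_inter_iff, mem_Icc, mem_Iio, mem_Ico]; grind
    rw [crpsKernel_eq_indicator_Iio_of_lt h, setIntegral_indicator measurableSet_Iio, hset,
      integral_Ico_eq_integral_Ioc, ← intervalIntegral.integral_of_le h0, integral_id,
      if_neg h.not_ge]
    ring

end crpsKernel

theorem crps_eq_two_integral_pinball_general
    (F Finv : ℝ → ℝ) (y : ℝ)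
    (hFmono : StrictMono F)
    (hFrange : ∀ x, F x ∈ Ioo (0 : ℝ) 1)
    (hinv₁ : ∀ q ∈ Ioo (0 : ℝ) 1, F (Finv q) = q) :
    ∫ z, (F z - if y ≤ z then (1 : ℝ) else 0) ^ 2
      = 2 * ∫ q in Ioo (0 : ℝ) 1, pinball q y (Finv q) := by
  have hq : ∀ᵐ q ∂volume.restrict (Ioo (0 : ℝ) 1), q ∈ Ioo 0 1 := ae_restrict_mem measurableSet_Ioo
  have hswap : ∫ q in Ioo (0 : ℝ) 1, ∫ z, crpsKernel F y q z
      = ∫ z, ∫ q in Ioo (0 : ℝ) 1, crpsKernel F y q z :=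
    integral_integral_swap_of_nonneg (measurable_crpsKernel hFmono.monotone.measurable)
      (hq.mono fun q hq _ => crpsKernel_nonneg (Ioo_subset_Icc_self hq))
      (hq.mono fun q hq => integrable_crpsKernel hFmono (hinv₁ q hq))
      (.of_forall fun _ => integrableOn_Ioo_crpsKernel)
  calc ∫ z, (F z - if y ≤ z then (1 : ℝ) else 0) ^ 2
      = ∫ z, 2 * ∫ q in Ioo (0 : ℝ) 1, crpsKernel F y q z := by
        congr 1; ext z
        rw [setIntegral_Ioo_crpsKernel (Ioo_subset_Icc_self (hFrange z))]
        ring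
    _ = 2 * ∫ q in Ioo (0 : ℝ) 1, pinball q y (Finv q) := by
        rw [integral_const_mul, ← hswap]
        congr 1
        exact setIntegral_congr_fun measurableSet_Ioo fun q hq =>
          integral_crpsKernel hFmono (hinv₁ q hq)

/-- For a continuous strictly increasing CDF `F` with inverse `Finv` on `(0,1)`,
the CRPS `∫ (F z - 1{z ≥ y})² dz` equals `2 ∫_0^1 ρ_q(y, F⁻¹(q)) dq`. -/
theorem crps_eq_two_integral_pinball
    (F Finv : ℝ → ℝ) (y : ℝ)
    (hFcont : Continuous F) (hFmono : StrictMono F)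
    (hFrange : ∀ x, F x ∈ Ioo (0 : ℝ) 1)
    (hinv₁ : ∀ q ∈ Ioo (0 : ℝ) 1, F (Finv q) = q)
    (hinv₂ : ∀ x, Finv (F x) = x)
    (hint₁ : Integrable (fun z => (F z - if y ≤ z then (1 : ℝ) else 0) ^ 2))
    (hint₂ : IntegrableOn (fun q => pinball q y (Finv q)) (Ioo (0 : ℝ) 1)) :
    ∫ z, (F z - if y ≤ z then (1 : ℝ) else 0) ^ 2
      = 2 * ∫ q in Ioo (0 : ℝ) 1, pinball q y (Finv q) :=
  crps_eq_two_integral_pinball_general F Finv y hFmono hFrange hinv₁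
end

section
/- Let P be a probability measure on ℝ with CDF G, and let F be any CDF. Then E_{y∼P} ∫_ℝ (F(z) − 1{z ≥ y})² dz = ∫_ℝ [(F(z) − G(z))² + G(z)(1 − G(z))] dz, assuming all integrals are finite. -/
open MeasureTheory Set Function

theorem integral_integral_swap_of_nonneg_s1 {α β : Type*} [MeasurableSpace α] [MeasurableSpace β]
    {μ : Measure α} {ν : Measure β} [SFinite μ] [SFinite ν] {f : α → β → ℝ}
    (hf : AEStronglyMeasurable (uncurry f) (μ.prod ν)) (hf_nonneg : ∀ x y, 0 ≤ f x y)
    (hf_sections : ∀ᵐ x ∂μ, Integrable (f x) ν)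
    (hf_iterated : Integrable (fun x => ∫ y, f x y ∂ν) μ) :
    ∫ x, ∫ y, f x y ∂ν ∂μ = ∫ y, ∫ x, f x y ∂μ ∂ν := by
  refine integral_integral_swap ((integrable_prod_iff hf).2 ⟨hf_sections, ?_⟩)
  simpa only [uncurry_apply_pair, Real.norm_of_nonneg (hf_nonneg _ _)] using hf_iterated

/-- Bias–variance decomposition for predicting a Bernoulli(`P s`) variable by the constant `c`. -/
theorem integral_sub_indicator_one_sq {α : Type*} [MeasurableSpace α] (P : Measure α)
    [IsProbabilityMeasure P] {s : Set α} (hs : MeasurableSet s) (c : ℝ) :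
    ∫ y, (c - s.indicator 1 y) ^ 2 ∂P = (c - P.real s) ^ 2 + P.real s * (1 - P.real s) := by
  have hsplit : (fun y => (c - s.indicator 1 y) ^ 2)
      = fun y => s.indicator (fun _ => (c - 1) ^ 2 - c ^ 2) y + c ^ 2 := by
    ext y
    by_cases hy : y ∈ s <;> simp [hy]
  rw [hsplit, integral_add ((integrable_const _).indicator hs) (integrable_const _),
    integral_indicator_const _ hs, integral_const, probReal_univ, smul_eq_mul, smul_eq_mul]
  ring

theorem expected_crps_decomposition_general
    (P : Measure ℝ) [IsProbabilityMeasure P] (F G : ℝ → ℝ)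
    (hG : ∀ z, G z = (P (Iic z)).toReal)
    (hFmeas : Measurable F)
    (hint_inner : ∀ y : ℝ, Integrable (fun z => (F z - if y ≤ z then (1 : ℝ) else 0) ^ 2))
    (hint_outer : Integrable
      (fun y => ∫ z, (F z - if y ≤ z then (1 : ℝ) else 0) ^ 2) P) :
    ∫ y, (∫ z, (F z - if y ≤ z then (1 : ℝ) else 0) ^ 2) ∂P
      = ∫ z, ((F z - G z) ^ 2 + G z * (1 - G z)) := by
  have hmeas : Measurable fun p : ℝ × ℝ => (F p.2 - if p.1 ≤ p.2 then (1 : ℝ) else 0) ^ 2 :=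
    ((hFmeas.comp measurable_snd).sub
      (Measurable.ite (measurableSet_le measurable_fst measurable_snd)
        measurable_const measurable_const)).pow_const 2
  rw [integral_integral_swap_of_nonneg_s1 hmeas.aestronglyMeasurable (fun _ _ => sq_nonneg _)
    (.of_forall hint_inner) hint_outer]
  refine integral_congr_ae (.of_forall fun z => ?_)
  have hind : ∀ y, (if y ≤ z then (1 : ℝ) else 0) = (Iic z).indicator 1 y := fun y => by
    simp [indicator, mem_Iic]
  simp only [hind, integral_sub_indicator_one_sq P measurableSet_Iic, hG, measureReal_def]

/-- For a probability measure `P` on ℝ with CDF `G` and any CDF `F`,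
`E_{y∼P} ∫ (F z - 1{z ≥ y})² dz = ∫ [(F z - G z)² + G z (1 - G z)] dz`. -/
theorem expected_crps_decomposition
    (P : Measure ℝ) [IsProbabilityMeasure P] (F G : ℝ → ℝ)
    (hG : ∀ z, G z = (P (Iic z)).toReal)
    (hFmeas : Measurable F) (hFmono : Monotone F)
    (hFrange : ∀ z, F z ∈ Icc (0 : ℝ) 1)
    (hint_inner : ∀ y : ℝ, Integrable (fun z => (F z - if y ≤ z then (1 : ℝ) else 0) ^ 2))
    (hint_outer : Integrable
      (fun y => ∫ z, (F z - if y ≤ z then (1 : ℝ) else 0) ^ 2) P)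
    (hint_rhs : Integrable (fun z => (F z - G z) ^ 2 + G z * (1 - G z))) :
    ∫ y, (∫ z, (F z - if y ≤ z then (1 : ℝ) else 0) ^ 2) ∂P
      = ∫ z, ((F z - G z) ^ 2 + G z * (1 - G z)) :=
  expected_crps_decomposition_general P F G hG hFmeas hint_inner hint_outer
end

section
/- Among all CDFs F for which ∫_ℝ (F(z) − G(z))² dz is finite, the expected CRPS E_{y∼P} CRPS(F, y) is minimized uniquely (up to almost-everywhere equality) at F = G, where G is the CDF of P; the minimum value equals ∫_ℝ G(z)(1 − G(z)) dz. -/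
/-!
For fixed `z`, the indicator `1{y ≤ z}` with `y ∼ P` is a Bernoulli variable of mean `G z`, so
`E (a - 1{y ≤ z})² = (a - G z)² + G z (1 - G z)` for every real `a`. Integrating in `z` (Fubini,
legitimate because the right-hand side is integrable) gives
`E CRPS(F, y) = ∫ (F - G)² + ∫ G (1 - G)`, and `∫ (F - G)² = 0` exactly when `F = G` a.e.
-/

open MeasureTheory Set

lemma MeasureTheory.integral_sub_sq_eq_zero_iff_ae_eq {α : Type*} [MeasurableSpace α]
    {μ : Measure α} {f g : α → ℝ} (hfg : Integrable (fun x => (f x - g x) ^ 2) μ) :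
    ∫ x, (f x - g x) ^ 2 ∂μ = 0 ↔ f =ᵐ[μ] g := by
  rw [integral_eq_zero_iff_of_nonneg (fun x => sq_nonneg _) hfg]
  simp only [Filter.EventuallyEq, Pi.zero_apply, sq_eq_zero_iff, sub_eq_zero]

namespace ProbabilityTheory

noncomputable def crps (F : ℝ → ℝ) (y : ℝ) : ℝ :=
  ∫ z, (F z - if y ≤ z then (1 : ℝ) else 0) ^ 2

lemma sub_ite_sq (a : ℝ) (p : Prop) [Decidable p] :
    (a - if p then (1 : ℝ) else 0) ^ 2 = a ^ 2 - (2 * a - 1) * if p then (1 : ℝ) else 0 := by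
  split_ifs <;> ring

lemma integrable_ite_le (μ : Measure ℝ) [IsFiniteMeasure μ] (z : ℝ) :
    Integrable (fun y => if y ≤ z then (1 : ℝ) else 0) μ :=
  (integrable_const 1).indicator measurableSet_Iic

variable (P : Measure ℝ) [IsProbabilityMeasure P]

lemma integral_ite_le_eq_cdf (z : ℝ) :
    ∫ y, (if y ≤ z then (1 : ℝ) else 0) ∂P = cdf P z := by
  rw [cdf_eq_real, ← integral_indicator_one measurableSet_Iic]
  rfl

lemma integral_sub_ite_le_sq (a z : ℝ) :
    ∫ y, (a - if y ≤ z then (1 : ℝ) else 0) ^ 2 ∂P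
      = (a - cdf P z) ^ 2 + cdf P z * (1 - cdf P z) := by
  simp only [sub_ite_sq]
  rw [integral_sub (integrable_const _) ((integrable_ite_le P z).const_mul _), integral_const_mul,
    integral_ite_le_eq_cdf, integral_const, probReal_univ, one_smul]
  ring

variable {P}

lemma integrable_prod_sub_ite_le_sq {F : ℝ → ℝ} (hF : Measurable F)
    (hFG : Integrable fun z => (F z - cdf P z) ^ 2)
    (hG : Integrable fun z => cdf P z * (1 - cdf P z)) :
    Integrable (fun p : ℝ × ℝ => (F p.2 - if p.1 ≤ p.2 then (1 : ℝ) else 0) ^ 2)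
      (P.prod volume) := by
  have hmeas : Measurable fun p : ℝ × ℝ => (F p.2 - if p.1 ≤ p.2 then (1 : ℝ) else 0) ^ 2 :=
    ((hF.comp measurable_snd).sub (Measurable.ite (measurableSet_le measurable_fst
      measurable_snd) measurable_const measurable_const)).pow_const 2
  refine (integrable_prod_iff' hmeas.aestronglyMeasurable).2 ⟨?_, ?_⟩
  · refine Filter.Eventually.of_forall fun z => ?_
    simp only [sub_ite_sq]
    exact (integrable_const _).sub ((integrable_ite_le P z).const_mul _)
  · simp_rw [Real.norm_of_nonneg (sq_nonneg _), integral_sub_ite_le_sq]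
    exact hFG.add hG

theorem integral_crps {F : ℝ → ℝ} (hF : Measurable F)
    (hFG : Integrable fun z => (F z - cdf P z) ^ 2)
    (hG : Integrable fun z => cdf P z * (1 - cdf P z)) :
    ∫ y, crps F y ∂P = (∫ z, (F z - cdf P z) ^ 2) + ∫ z, cdf P z * (1 - cdf P z) := by
  simp only [crps]
  rw [integral_integral_swap (integrable_prod_sub_ite_le_sq hF hFG hG)]
  simp_rw [integral_sub_ite_le_sq]
  exact integral_add hFG hG

theorem integral_crps_cdf (hG : Integrable fun z => cdf P z * (1 - cdf P z)) :
    ∫ y, crps (cdf P) y ∂P = ∫ z, cdf P z * (1 - cdf P z) := by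
  simpa using integral_crps (monotone_cdf P).measurable (by simp) hG

end ProbabilityTheory

open ProbabilityTheory

/-- Among all CDFs `F` with `∫ (F - G)² < ∞`, the expected CRPS
`E_{y∼P} CRPS(F,y)` is minimized uniquely (up to a.e. equality) at `F = G`,
with minimum value `∫ G (1 - G)`. -/
theorem expected_crps_minimized_at_true_cdf
    (P : Measure ℝ) [IsProbabilityMeasure P] (G : ℝ → ℝ)
    (hG : ∀ z, G z = (P (Iic z)).toReal)
    (hGint : Integrable (fun z => G z * (1 - G z))) :
    (∫ y, (∫ z, (G z - if y ≤ z then (1 : ℝ) else 0) ^ 2) ∂P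
        = ∫ z, G z * (1 - G z))
    ∧ (∀ F : ℝ → ℝ, Measurable F → Monotone F → (∀ z, F z ∈ Icc (0 : ℝ) 1) →
        Integrable (fun z => (F z - G z) ^ 2) →
        (∫ y, (∫ z, (G z - if y ≤ z then (1 : ℝ) else 0) ^ 2) ∂P
            ≤ ∫ y, (∫ z, (F z - if y ≤ z then (1 : ℝ) else 0) ^ 2) ∂P)
        ∧ ((∫ y, (∫ z, (F z - if y ≤ z then (1 : ℝ) else 0) ^ 2) ∂P
              = ∫ y, (∫ z, (G z - if y ≤ z then (1 : ℝ) else 0) ^ 2) ∂P)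
            ↔ F =ᵐ[volume] G)) := by
  obtain rfl : G = cdf P := funext fun z => by rw [hG, cdf_eq_real, measureReal_def]
  refine ⟨integral_crps_cdf hGint, fun F hF _ _ hFG => ?_⟩
  change ∫ y, crps (cdf P) y ∂P ≤ ∫ y, crps F y ∂P
    ∧ (∫ y, crps F y ∂P = ∫ y, crps (cdf P) y ∂P ↔ F =ᵐ[volume] cdf P)
  rw [integral_crps_cdf hGint, integral_crps hF hFG hGint, add_eq_right,
    integral_sub_sq_eq_zero_iff_ae_eq hFG]
  exact ⟨le_add_of_nonneg_left (integral_nonneg fun z => sq_nonneg _), Iff.rfl⟩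
end
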